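/- arXiv:2206.01835 — 7 statements merged into one kernel-verified Lean document; each statement's English description precedes it below -/
import Mathlib

section
/- Let p(z) = Σ_{n=0}^{k} a_n z^n be a polynomial in one complex variable with leading coefficient a_k ≠ 0, and let f be holomorphic on an open ball B_r(0) ⊂ ℂ with r > 1. Then |f(0)| ≤ |a_k|^{-1} · sup_{|z|=1} |f(z) p(z)|. -/
/-!
Let `q` be the reverse of the conjugate polynomial `p̄`, i.e. `q(z) = z^k · conj (p (1 / conj z))`.
On the unit circle `|q| = |p|`, while `q(0) = conj a_k`. The maximum modulus principle applied
to the holomorphic function `f q` on the unit disc gives `|f(0)| |a_k| ≤ sup_{|z|=1} |f p|`.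
-/

open Polynomial Metric

theorem Polynomial.norm_eval_reverse_map_conj_of_norm_eq_one (p : ℂ[X]) {z : ℂ}
    (hz : ‖z‖ = 1) : ‖((p.map (starRingEnd ℂ)).reverse).eval z‖ = ‖p.eval z‖ := by
  have hz0 : starRingEnd ℂ z ≠ 0 := by simp [← norm_ne_zero_iff, hz]
  have : Invertible (starRingEnd ℂ z) := invertibleOfNonzero hz0
  have hinv : ⅟(starRingEnd ℂ z) = z := by
    rw [invOf_eq_inv, Complex.inv_def, Complex.conj_conj, Complex.normSq_eq_norm_sq,
      Complex.norm_conj, hz]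
    simp
  have key := eval₂_reverse_mul_pow (RingHom.id ℂ) (starRingEnd ℂ z) (p.map (starRingEnd ℂ))
  rw [hinv, eval₂_id, eval₂_id, eval_map, eval₂_at_apply] at key
  simpa [hz] using congrArg norm key

theorem Polynomial.norm_eval_zero_reverse_map_conj (p : ℂ[X]) :
    ‖((p.map (starRingEnd ℂ)).reverse).eval 0‖ = ‖p.leadingCoeff‖ := by
  rw [← coeff_zero_eq_eval_zero, coeff_zero_reverse,
    leadingCoeff_map_of_injective (starRingEnd ℂ).injective, Complex.norm_conj]

theorem bddAbove_norm_of_norm_eq_one {E : Type*} [SeminormedAddCommGroup E] {g : ℂ → E}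
    (hg : ContinuousOn g (sphere 0 1)) :
    BddAbove {x : ℝ | ∃ z : ℂ, ‖z‖ = 1 ∧ x = ‖g z‖} := by
  have hset : {x : ℝ | ∃ z : ℂ, ‖z‖ = 1 ∧ x = ‖g z‖} = (‖g ·‖) '' sphere 0 1 := by
    ext x
    simp [eq_comm]
  rw [hset]
  exact (isCompact_sphere 0 1).bddAbove_image hg.norm

theorem norm_apply_zero_le_of_norm_eq_one_le {E : Type*} [NormedAddCommGroup E]
    [NormedSpace ℂ E] {g : ℂ → E} {r : ℝ} (hr : 1 < r) (hg : DifferentiableOn ℂ g (ball 0 r))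
    {C : ℝ} (hC : ∀ z : ℂ, ‖z‖ = 1 → ‖g z‖ ≤ C) : ‖g 0‖ ≤ C := by
  refine Complex.norm_le_of_forall_mem_frontier_norm_le isBounded_ball
    (hg.diffContOnCl_ball (closedBall_subset_ball hr)) (fun z hz => ?_) ?_
  · rw [frontier_ball 0 one_ne_zero] at hz
    exact hC z (mem_sphere_zero_iff_norm.mp hz)
  · rw [closure_ball 0 one_ne_zero]
    exact mem_closedBall_self zero_le_one

/-- Maximum-principle estimate: for a polynomial `p` with nonzero leading coefficient `a_k`
and `f` holomorphic on a ball of radius `r > 1`,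
`|f 0| ≤ |a_k|⁻¹ * sup_{|z|=1} |f z * p z|`. -/
theorem stmt0 (r : ℝ) (hr : 1 < r) (f : ℂ → ℂ)
    (hf : DifferentiableOn ℂ f (Metric.ball (0 : ℂ) r))
    (p : Polynomial ℂ) (hp : p.leadingCoeff ≠ 0) :
    ‖f 0‖ ≤ ‖p.leadingCoeff‖⁻¹ *
      sSup {x : ℝ | ∃ z : ℂ, ‖z‖ = 1 ∧ x = ‖f z * p.eval z‖} := by
  set q : ℂ[X] := (p.map (starRingEnd ℂ)).reverse
  have hbdd := bddAbove_norm_of_norm_eq_one (g := fun z => f z * p.eval z)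
    ((hf.continuousOn.mono (sphere_subset_closedBall.trans (closedBall_subset_ball hr))).mul
      p.continuous.continuousOn)
  have hmax : ‖f 0 * q.eval 0‖ ≤ sSup {x : ℝ | ∃ z : ℂ, ‖z‖ = 1 ∧ x = ‖f z * p.eval z‖} := by
    refine norm_apply_zero_le_of_norm_eq_one_le (g := fun z => f z * q.eval z) hr
      (hf.mul q.differentiable.differentiableOn) fun z hz => ?_
    rw [norm_mul, p.norm_eval_reverse_map_conj_of_norm_eq_one hz, ← norm_mul]
    exact le_csSup hbdd ⟨z, hz, rfl⟩
  rw [norm_mul, p.norm_eval_zero_reverse_map_conj] at hmax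
  rwa [inv_mul_eq_div, le_div_iff₀ (norm_pos_iff.mpr hp)]
end

section
/- Let V₁ →A V₂ →B V₃ be continuous linear maps between locally convex Hausdorff topological vector spaces with B ∘ A = 0. Then Im(A) is dense in Ker(B) if and only if Im(Bᵗ) is weak-* dense in Ker(Aᵗ). -/
/-!
By Hahn–Banach, the closure of a subspace of a locally convex space is the set of points killed
by every continuous functional that kills the subspace. Applied in `V₂`, this says
`Ker B ⊆ closure (Im A)` iff every functional annihilating `Im A` vanishes on `Ker B`. Applied in
the weak-* dual, whose continuous functionals are the evaluations at points of `V₂`, and using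
that `V₃'` separates points, the weak-* closure of `Im Bᵗ` is the annihilator of `Ker B`; so
`Ker Aᵗ ⊆ closure (Im Bᵗ)` says the same thing.
-/

theorem LinearMap.apply_eq_zero_of_forall_mem_lt {E : Type*} [AddCommGroup E] [Module ℝ E]
    (f : E →ₗ[ℝ] ℝ) {p : Submodule ℝ E} {u : ℝ} (h : ∀ y ∈ p, f y < u) {y : E} (hy : y ∈ p) :
    f y = 0 := by
  by_contra hne
  have := h ((u / f y) • y) (p.smul_mem _ hy)
  rw [map_smul, smul_eq_mul, div_mul_cancel₀ _ hne] at this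
  exact lt_irrefl u this

theorem Submodule.mem_closure_iff_forall_dual {E : Type*} [AddCommGroup E] [Module ℝ E]
    [TopologicalSpace E] [IsTopologicalAddGroup E] [ContinuousSMul ℝ E] [LocallyConvexSpace ℝ E]
    (p : Submodule ℝ E) {x : E} :
    x ∈ closure (p : Set E) ↔ ∀ f : StrongDual ℝ E, (∀ y ∈ p, f y = 0) → f x = 0 := by
  refine ⟨fun hx f hf ↦ closure_minimal hf (isClosed_eq f.continuous continuous_const) hx,
    fun h ↦ ?_⟩
  by_contra hx
  obtain ⟨f, u, hfu, hfx⟩ :=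
    geometric_hahn_banach_closed_point p.convex.closure isClosed_closure hx
  have hu : 0 < u := by simpa using hfu 0 (subset_closure p.zero_mem)
  have hfp : ∀ y ∈ p, f y = 0 := fun y hy ↦
    (f : E →ₗ[ℝ] ℝ).apply_eq_zero_of_forall_mem_lt (fun z hz ↦ hfu z (subset_closure hz)) hy
  linarith [h f hfp]

theorem LinearMap.mem_closure_range_iff {E F : Type*} [AddCommGroup E] [Module ℝ E]
    [AddCommGroup F] [Module ℝ F] [TopologicalSpace F] [IsTopologicalAddGroup F]
    [ContinuousSMul ℝ F] [LocallyConvexSpace ℝ F] (A : E →ₗ[ℝ] F) {y : F} :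
    y ∈ closure (Set.range A) ↔ ∀ f : StrongDual ℝ F, (∀ x, f (A x) = 0) → f y = 0 := by
  rw [← LinearMap.coe_range, Submodule.mem_closure_iff_forall_dual]
  simp only [LinearMap.mem_range, forall_exists_index, forall_apply_eq_imp_iff]

theorem WeakBilin.mem_closure_iff_forall_eval {E F : Type*} [AddCommGroup E] [Module ℝ E]
    [AddCommGroup F] [Module ℝ F] {B : E →ₗ[ℝ] F →ₗ[ℝ] ℝ} (p : Submodule ℝ (WeakBilin B))
    {x : WeakBilin B} :
    x ∈ closure (p : Set (WeakBilin B)) ↔ ∀ y : F, (∀ z ∈ p, B z y = 0) → B x y = 0 := by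
  rw [p.mem_closure_iff_forall_dual, (LinearMap.dualEmbedding_surjective B).forall]
  rfl

section Transpose

variable {E F : Type*} [AddCommGroup E] [Module ℝ E] [TopologicalSpace E]
  [AddCommGroup F] [Module ℝ F] [TopologicalSpace F]

noncomputable def ContinuousLinearMap.transposeWeakDual (B : E →L[ℝ] F) :
    StrongDual ℝ F →ₗ[ℝ] WeakDual ℝ E where
  toFun ψ := StrongDual.toWeakDual (ψ.comp B)
  map_add' _ _ := rfl
  map_smul' _ _ := rfl

theorem ContinuousLinearMap.coe_range_transposeWeakDual (B : E →L[ℝ] F) :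
    (LinearMap.range B.transposeWeakDual : Set (WeakDual ℝ E)) =
      {φ : WeakDual ℝ E | ∃ ψ : F →L[ℝ] ℝ, ∀ x : E, φ x = ψ (B x)} := by
  ext φ
  exact ⟨fun ⟨ψ, h⟩ ↦ ⟨ψ, fun x ↦ h ▸ rfl⟩, fun ⟨ψ, h⟩ ↦ ⟨ψ, (DFunLike.ext _ _ h).symm⟩⟩

theorem ContinuousLinearMap.mem_closure_range_transposeWeakDual_iff [SeparatingDual ℝ F]
    (B : E →L[ℝ] F) {φ : WeakDual ℝ E} :
    φ ∈ closure (LinearMap.range B.transposeWeakDual : Set (WeakDual ℝ E)) ↔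
      ∀ x, B x = 0 → φ x = 0 := by
  refine (WeakBilin.mem_closure_iff_forall_eval (B := topDualPairing ℝ E) _).trans ?_
  refine forall_congr' fun x ↦ imp_congr_left ?_
  refine ⟨fun h ↦ (SeparatingDual.eq_zero_iff_forall_dual_eq_zero (B x)).2 fun ψ ↦ h _ ⟨ψ, rfl⟩, ?_⟩
  rintro hx _ ⟨ψ, rfl⟩
  exact (congrArg ψ hx).trans ψ.map_zero

end Transpose

theorem stmt4_general {V₁ V₂ V₃ : Type*}
    [AddCommGroup V₁] [Module ℝ V₁] [TopologicalSpace V₁]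
    [AddCommGroup V₂] [Module ℝ V₂] [TopologicalSpace V₂] [IsTopologicalAddGroup V₂]
    [ContinuousSMul ℝ V₂] [LocallyConvexSpace ℝ V₂]
    [AddCommGroup V₃] [Module ℝ V₃] [TopologicalSpace V₃] [IsTopologicalAddGroup V₃]
    [ContinuousSMul ℝ V₃] [LocallyConvexSpace ℝ V₃] [T2Space V₃]
    (A : V₁ →L[ℝ] V₂) (B : V₂ →L[ℝ] V₃) :
    ({w : V₂ | B w = 0} ⊆ closure (Set.range A)) ↔
      ({φ : WeakDual ℝ V₂ | ∀ v : V₁, φ (A v) = 0} ⊆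
        closure {φ : WeakDual ℝ V₂ | ∃ ψ : V₃ →L[ℝ] ℝ, ∀ w : V₂, φ w = ψ (B w)}) := by
  rw [← B.coe_range_transposeWeakDual]
  simp only [Set.subset_def, Set.mem_ofPred_eq, B.mem_closure_range_transposeWeakDual_iff]
  exact ⟨fun h φ hφ w hw ↦ (A : V₁ →ₗ[ℝ] V₂).mem_closure_range_iff.1 (h w hw) φ hφ,
    fun h w hw ↦ (A : V₁ →ₗ[ℝ] V₂).mem_closure_range_iff.2 fun f hf ↦ h f hf w hw⟩

/-- For continuous linear maps `A : V₁ → V₂`, `B : V₂ → V₃` between locally convex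
Hausdorff topological vector spaces with `B ∘ A = 0`: `Im A` is dense in `Ker B`
iff `Im Bᵗ` is weak-* dense in `Ker Aᵗ`. -/
theorem stmt4 {V₁ V₂ V₃ : Type*}
    [AddCommGroup V₁] [Module ℝ V₁] [TopologicalSpace V₁] [IsTopologicalAddGroup V₁]
    [ContinuousSMul ℝ V₁] [LocallyConvexSpace ℝ V₁] [T2Space V₁]
    [AddCommGroup V₂] [Module ℝ V₂] [TopologicalSpace V₂] [IsTopologicalAddGroup V₂]
    [ContinuousSMul ℝ V₂] [LocallyConvexSpace ℝ V₂] [T2Space V₂]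
    [AddCommGroup V₃] [Module ℝ V₃] [TopologicalSpace V₃] [IsTopologicalAddGroup V₃]
    [ContinuousSMul ℝ V₃] [LocallyConvexSpace ℝ V₃] [T2Space V₃]
    (A : V₁ →L[ℝ] V₂) (B : V₂ →L[ℝ] V₃) (hBA : ∀ v : V₁, B (A v) = 0) :
    ({w : V₂ | B w = 0} ⊆ closure (Set.range A)) ↔
      ({φ : WeakDual ℝ V₂ | ∀ v : V₁, φ (A v) = 0} ⊆
        closure {φ : WeakDual ℝ V₂ | ∃ ψ : V₃ →L[ℝ] ℝ, ∀ w : V₂, φ w = ψ (B w)}) :=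
  stmt4_general A B
end

section
/- For integers n, m with n ≡ m (mod 2), define q_{n,m}(λ) ∈ ℂ[λ] by: q_{n,m} = 1 if n = m; q_{n,m}(λ) = (λ + (|m|+1)/2)(λ + (|m|+3)/2)⋯(λ + (|n|−1)/2) if |n| > |m| and n, m have the same sign; q_{n,m}(λ) = (λ − (|n|+1)/2)⋯(λ − (|m|−1)/2) if |n| < |m| and same sign; q_{n,m}(λ) = (λ + (|n|−1)/2)(λ + (|n|−3)/2)⋯(λ − (|m|−1)/2) if n, m have different signs. Then for all integers l, n, m with l ≡ n ≡ m (mod 2), the quotient r^l_{n,m} := (q_{n,m} · q_{l,n}) / q_{l,m} is a polynomial, and moreover r^l_{n,m} = 1 if l ≤ n ≤ m or m ≤ n ≤ l; r^l_{n,m} = q_{n,m} · q_{m,n} if l ≤ m < n or n < m ≤ l; and r^l_{n,m} = q_{n,l} · q_{l,n} if m < l < n or n < l < m. -/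
open Polynomial

/-- The generators `q_{n,m}` of the Paley–Wiener–Schwartz spaces for `SL(2,ℝ)`:
`q_{n,m} = 1` if `n = m`;
`q_{n,m}(λ) = (λ + (|m|+1)/2)⋯(λ + (|n|-1)/2)` if `|n| > |m|`, same signs;
`q_{n,m}(λ) = (λ - (|n|+1)/2)⋯(λ - (|m|-1)/2)` if `|n| < |m|`, same signs;
`q_{n,m}(λ) = (λ + (|n|-1)/2)(λ + (|n|-3)/2)⋯(λ - (|m|-1)/2)` for different signs. -/
noncomputable def qpoly (n m : ℤ) : Polynomial ℂ :=
  if n = m then 1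
  else if 0 ≤ n * m then
    if |m| < |n| then
      ∏ j ∈ Finset.range (((|n| - |m|) / 2).toNat),
        (X + C ((((|m| : ℤ) : ℂ) + 1) / 2 + (j : ℂ)))
    else
      ∏ j ∈ Finset.range (((|m| - |n|) / 2).toNat),
        (X - C ((((|n| : ℤ) : ℂ) + 1) / 2 + (j : ℂ)))
  else
    ∏ j ∈ Finset.range (((|n| + |m|) / 2).toNat),
      (X + C ((((|n| : ℤ) : ℂ) - 1) / 2 - (j : ℂ)))

/-- Ascending product `(X - (c))·(X - (c+1))⋯(X - (c+K-1))`. -/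
noncomputable def Ppoly (K : ℕ) (c : ℂ) : Polynomial ℂ :=
  ∏ j ∈ Finset.range K, (X - C (c + (j : ℂ)))

/-- Ascending product `(X + (c))·(X + (c+1))⋯(X + (c+K-1))`. -/
noncomputable def Npoly (K : ℕ) (c : ℂ) : Polynomial ℂ :=
  ∏ j ∈ Finset.range K, (X + C (c + (j : ℂ)))

lemma castHalf (a : ℤ) (h0 : 0 ≤ a) (h2 : 2 ∣ a) :
    (((a / 2).toNat : ℕ) : ℂ) = (a : ℂ) / 2 := by
  have h : ((a / 2).toNat : ℤ) = a / 2 := Int.toNat_of_nonneg (by omega)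
  have h' : (((a / 2).toNat : ℤ) : ℂ) = ((a / 2 : ℤ) : ℂ) := by rw [h]
  rw [Int.cast_natCast] at h'
  rw [h']
  obtain ⟨k, rfl⟩ := h2
  rw [Int.mul_ediv_cancel_left _ two_ne_zero]
  push_cast
  ring

lemma prod_reflect_sub (f : ℂ → Polynomial ℂ) (K : ℕ) (c : ℂ) :
    ∏ j ∈ Finset.range K, f (c - (j : ℂ))
      = ∏ j ∈ Finset.range K, f (c - ((K : ℂ) - 1) + (j : ℂ)) := by
  calc ∏ j ∈ Finset.range K, f (c - (j : ℂ))
      = ∏ j ∈ Finset.range K, f (c - ((K - 1 - j : ℕ) : ℂ)) :=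
        (Finset.prod_range_reflect (fun j => f (c - (j : ℂ))) K).symm
    _ = ∏ j ∈ Finset.range K, f (c - ((K : ℂ) - 1) + (j : ℂ)) := by
        refine Finset.prod_congr rfl fun j hj => ?_
        simp only [Finset.mem_range] at hj
        congr 1
        have h1 : j ≤ K - 1 := by omega
        have h2 : (1 : ℕ) ≤ K := by omega
        rw [Nat.cast_sub h1, Nat.cast_sub h2]
        push_cast
        ring

lemma P_add (K₁ K₂ : ℕ) (c : ℂ) :
    Ppoly (K₁ + K₂) c = Ppoly K₁ c * Ppoly K₂ (c + (K₁ : ℂ)) := by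
  unfold Ppoly
  rw [Finset.prod_range_add]
  congr 1
  refine Finset.prod_congr rfl fun j _ => ?_
  congr 2
  push_cast
  ring

lemma N_add (K₁ K₂ : ℕ) (c : ℂ) :
    Npoly (K₁ + K₂) c = Npoly K₁ c * Npoly K₂ (c + (K₁ : ℂ)) := by
  unfold Npoly
  rw [Finset.prod_range_add]
  congr 1
  refine Finset.prod_congr rfl fun j _ => ?_
  congr 2
  push_cast
  ring

/-- `qpoly a b` for `a ≤ b` is the ascending product with roots `(a+1)/2, …, (b-1)/2`. -/
lemma qpoly_le (a b : ℤ) (hp : a % 2 = b % 2) (h : a ≤ b) :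
    qpoly a b = Ppoly (((b - a) / 2).toNat) (((a : ℂ) + 1) / 2) := by
  rcases eq_or_lt_of_le h with rfl | hlt
  · simp [qpoly, Ppoly]
  · have hd : 2 ∣ b - a := by omega
    unfold qpoly
    rw [if_neg hlt.ne]
    by_cases h1 : 0 ≤ a * b
    · by_cases h2 : |b| < |a|
      · -- both nonpositive: a < b ≤ 0
        have hb : b ≤ 0 := by
          by_contra hb
          push_neg at hb
          have ha : 0 ≤ a := by
            by_contra ha
            push_neg at ha
            exact absurd h1 (not_le.mpr (mul_neg_of_neg_of_pos ha hb))
          rw [abs_of_nonneg ha, abs_of_pos hb] at h2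
          omega
        have ha : a < 0 := lt_of_lt_of_le hlt hb
        rw [if_pos h1, if_pos h2, abs_of_nonpos hb, abs_of_neg ha,
          show -a - -b = b - a by ring]
        set K := ((b - a) / 2).toNat with hKdef
        set c : ℂ := (((-b : ℤ) : ℂ) + 1) / 2 with hc
        have step1 : ∏ j ∈ Finset.range K, (X + C (c + (j : ℂ)))
            = ∏ j ∈ Finset.range K, (X - C ((-c) - (j : ℂ))) := by
          refine Finset.prod_congr rfl fun j _ => ?_
          rw [show (-c) - (j : ℂ) = -(c + j) by ring, map_neg, sub_neg_eq_add]
        rw [step1, prod_reflect_sub (fun t => X - C t) K (-c)]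
        have : Ppoly K (-c - ((K : ℂ) - 1)) = Ppoly K (((a : ℂ) + 1) / 2) := by
          congr 1
          have hK : ((K : ℕ) : ℂ) = ((b : ℂ) - a) / 2 := by
            rw [hKdef, castHalf (b - a) (by omega) hd]
            push_cast; ring
          rw [hc, hK]
          push_cast
          ring
        exact this
      · -- both nonnegative: 0 ≤ a < b
        have ha : 0 ≤ a := by
          by_contra ha
          push_neg at ha
          rcases le_or_gt b 0 with hb | hb
          · rw [abs_of_nonpos hb, abs_of_neg ha] at h2
            omega
          · exact absurd h1 (not_le.mpr (mul_neg_of_neg_of_pos ha hb))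
        rw [if_pos h1, if_neg h2, abs_of_nonneg ha, abs_of_nonneg (ha.trans h)]
        rfl
    · -- a < 0 < b
      push_neg at h1
      have ha : a < 0 := by
        by_contra ha
        push_neg at ha
        exact absurd h1 (not_lt.mpr (mul_nonneg ha (ha.trans hlt.le)))
      have hb : 0 < b := by
        by_contra hb
        push_neg at hb
        exact absurd h1 (not_lt.mpr (by nlinarith))
      rw [if_neg (not_le.mpr h1), abs_of_neg ha, abs_of_pos hb,
        show -a + b = b - a by ring]
      set K := ((b - a) / 2).toNat with hKdef
      set c : ℂ := (((-a : ℤ) : ℂ) - 1) / 2 with hc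
      have step1 : ∏ j ∈ Finset.range K, (X + C (c - (j : ℂ)))
          = ∏ j ∈ Finset.range K, (X - C ((-c) + (j : ℂ))) := by
        refine Finset.prod_congr rfl fun j _ => ?_
        rw [show (-c) + (j : ℂ) = -(c - j) by ring, map_neg, sub_neg_eq_add]
      rw [step1]
      have : Ppoly K (-c) = Ppoly K (((a : ℂ) + 1) / 2) := by
        congr 1
        rw [hc]
        push_cast
        ring
      exact this

/-- `qpoly a b` for `b ≤ a` is the product with roots `-(b+1)/2, …, -(a-1)/2`. -/
lemma qpoly_ge (a b : ℤ) (hp : a % 2 = b % 2) (h : b ≤ a) :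
    qpoly a b = Npoly (((a - b) / 2).toNat) (((b : ℂ) + 1) / 2) := by
  rcases eq_or_lt_of_le h with rfl | hlt
  · simp [qpoly, Npoly]
  · have hd : 2 ∣ a - b := by omega
    unfold qpoly
    rw [if_neg hlt.ne']
    by_cases h1 : 0 ≤ a * b
    · by_cases h2 : |b| < |a|
      · -- both nonnegative: 0 ≤ b < a
        have hb : 0 ≤ b := by
          by_contra hb
          push_neg at hb
          rcases le_or_gt a 0 with ha | ha
          · rw [abs_of_neg hb, abs_of_nonpos ha] at h2
            omega
          · exact absurd h1 (not_le.mpr (mul_neg_of_pos_of_neg ha hb))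
        rw [if_pos h1, if_pos h2, abs_of_nonneg hb, abs_of_nonneg (hb.trans hlt.le)]
        rfl
      · -- both nonpositive: b < a ≤ 0
        have ha : a ≤ 0 := by
          by_contra ha
          push_neg at ha
          have hb : 0 ≤ b := by
            by_contra hb
            push_neg at hb
            exact absurd h1 (not_le.mpr (mul_neg_of_pos_of_neg ha hb))
          rw [abs_of_nonneg hb, abs_of_pos ha] at h2
          omega
        have hb : b < 0 := lt_of_lt_of_le hlt ha
        rw [if_pos h1, if_neg h2, abs_of_nonpos ha, abs_of_neg hb,
          show -b - -a = a - b by ring]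
        set K := ((a - b) / 2).toNat with hKdef
        set c : ℂ := (((-a : ℤ) : ℂ) + 1) / 2 with hc
        have step1 : ∏ j ∈ Finset.range K, (X - C (c + (j : ℂ)))
            = ∏ j ∈ Finset.range K, (X + C ((-c) - (j : ℂ))) := by
          refine Finset.prod_congr rfl fun j _ => ?_
          rw [show (-c) - (j : ℂ) = -(c + j) by ring, map_neg, ← sub_eq_add_neg]
        rw [step1, prod_reflect_sub (fun t => X + C t) K (-c)]
        have : Npoly K (-c - ((K : ℂ) - 1)) = Npoly K (((b : ℂ) + 1) / 2) := by
          congr 1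
          have hK : ((K : ℕ) : ℂ) = ((a : ℂ) - b) / 2 := by
            rw [hKdef, castHalf (a - b) (by omega) hd]
            push_cast; ring
          rw [hc, hK]
          push_cast
          ring
        exact this
    · -- b < 0 < a
      push_neg at h1
      have hb : b < 0 := by
        by_contra hb
        push_neg at hb
        exact absurd h1 (not_lt.mpr (mul_nonneg (hb.trans hlt.le) hb))
      have ha : 0 < a := by
        by_contra ha
        push_neg at ha
        exact absurd h1 (not_lt.mpr (by nlinarith))
      rw [if_neg (not_le.mpr h1), abs_of_pos ha, abs_of_neg hb,
        show a + -b = a - b by ring]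
      set K := ((a - b) / 2).toNat with hKdef
      set c : ℂ := (((a : ℤ) : ℂ) - 1) / 2 with hc
      rw [prod_reflect_sub (fun t => X + C t) K c]
      have : Npoly K (c - ((K : ℂ) - 1)) = Npoly K (((b : ℂ) + 1) / 2) := by
        congr 1
        have hK : ((K : ℕ) : ℂ) = ((a : ℂ) - b) / 2 := by
          rw [hKdef, castHalf (a - b) (by omega) hd]
          push_cast; ring
        rw [hc, hK]
        ring
      exact this

lemma qpoly_self (a : ℤ) : qpoly a a = 1 := by
  simp [qpoly]

lemma P_concat (a b c : ℤ) (hab : a ≤ b) (hbc : b ≤ c)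
    (h1 : a % 2 = b % 2) (h2 : b % 2 = c % 2) :
    Ppoly (((b - a) / 2).toNat) (((a : ℂ) + 1) / 2)
      * Ppoly (((c - b) / 2).toNat) (((b : ℂ) + 1) / 2)
      = Ppoly (((c - a) / 2).toNat) (((a : ℂ) + 1) / 2) := by
  have hK : ((c - a) / 2).toNat = ((b - a) / 2).toNat + ((c - b) / 2).toNat := by omega
  rw [hK, P_add]
  congr 2
  rw [castHalf (b - a) (by omega) (by omega)]
  push_cast
  ring

lemma N_concat (a b c : ℤ) (hab : a ≤ b) (hbc : b ≤ c)
    (h1 : a % 2 = b % 2) (h2 : b % 2 = c % 2) :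
    Npoly (((c - b) / 2).toNat) (((b : ℂ) + 1) / 2)
      * Npoly (((b - a) / 2).toNat) (((a : ℂ) + 1) / 2)
      = Npoly (((c - a) / 2).toNat) (((a : ℂ) + 1) / 2) := by
  have hK : ((c - a) / 2).toNat = ((b - a) / 2).toNat + ((c - b) / 2).toNat := by omega
  rw [hK, N_add, mul_comm]
  congr 2
  rw [castHalf (b - a) (by omega) (by omega)]
  push_cast
  ring

/-- For `l ≡ n ≡ m (mod 2)`, the quotient `r^l_{n,m} = (q_{n,m}·q_{l,n})/q_{l,m}` is a
polynomial, equal to `1` if `l ≤ n ≤ m` or `m ≤ n ≤ l`, to `q_{n,m}·q_{m,n}` if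
`l ≤ m < n` or `n < m ≤ l`, and to `q_{n,l}·q_{l,n}` if `m < l < n` or `n < l < m`. -/
theorem stmt7 (l n m : ℤ) (hln : l % 2 = n % 2) (hnm : n % 2 = m % 2) :
    ∃ r : Polynomial ℂ,
      qpoly n m * qpoly l n = r * qpoly l m ∧
      ((l ≤ n ∧ n ≤ m) ∨ (m ≤ n ∧ n ≤ l) → r = 1) ∧
      ((l ≤ m ∧ m < n) ∨ (n < m ∧ m ≤ l) → r = qpoly n m * qpoly m n) ∧
      ((m < l ∧ l < n) ∨ (n < l ∧ l < m) → r = qpoly n l * qpoly l n) := by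
  have hlm : l % 2 = m % 2 := hln.trans hnm
  rcases le_or_gt l n with h1 | h1 <;> rcases le_or_gt n m with h2 | h2
  · -- l ≤ n ≤ m
    refine ⟨1, ?_, fun _ => rfl, fun h => absurd h (by omega), fun h => absurd h (by omega)⟩
    rw [one_mul, qpoly_le n m hnm h2, qpoly_le l n hln h1,
      qpoly_le l m hlm (h1.trans h2), mul_comm]
    exact P_concat l n m h1 h2 hln hnm
  · -- l ≤ n, m < n
    rcases le_or_gt l m with h3 | h3
    · -- l ≤ m < n
      refine ⟨qpoly n m * qpoly m n, ?_, fun h => absurd h (by omega), fun _ => rfl,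
        fun h => absurd h (by omega)⟩
      have key : qpoly l n = qpoly l m * qpoly m n := by
        rw [qpoly_le l n hln h1, qpoly_le l m hlm h3, qpoly_le m n hnm.symm h2.le,
          P_concat l m n h3 h2.le hlm hnm.symm]
      rw [key]; ring
    · -- m < l ≤ n
      rcases eq_or_lt_of_le h1 with rfl | h1'
      · -- l = n
        refine ⟨1, ?_, fun _ => rfl, fun h => absurd h (by omega), fun h => absurd h (by omega)⟩
        rw [qpoly_self, one_mul, mul_one]
      · -- m < l < n
        refine ⟨qpoly n l * qpoly l n, ?_, fun h => absurd h (by omega),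
          fun h => absurd h (by omega), fun _ => rfl⟩
        have key : qpoly n m = qpoly n l * qpoly l m := by
          rw [qpoly_ge n m hnm h2.le, qpoly_ge n l hln.symm h1'.le, qpoly_ge l m hlm h3.le,
            N_concat m l n h3.le h1'.le hlm.symm hln]
        rw [key]; ring
  · -- n < l, n ≤ m
    rcases le_or_gt l m with h3 | h3
    · rcases eq_or_lt_of_le h3 with rfl | h3'
      · -- l = m
        refine ⟨qpoly n l * qpoly l n, ?_, fun h => absurd h (by omega), fun _ => rfl,
          fun h => absurd h (by omega)⟩
        rw [qpoly_self, mul_one]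
      · -- n < l < m
        refine ⟨qpoly n l * qpoly l n, ?_, fun h => absurd h (by omega),
          fun h => absurd h (by omega), fun _ => rfl⟩
        have key : qpoly n m = qpoly n l * qpoly l m := by
          rw [qpoly_le n m hnm h2, qpoly_le n l hln.symm h1.le, qpoly_le l m hlm h3'.le,
            P_concat n l m h1.le h3'.le hln.symm hlm]
        rw [key]; ring
    · -- n ≤ m < l
      rcases eq_or_lt_of_le h2 with rfl | h2'
      · -- n = m
        refine ⟨1, ?_, fun _ => rfl, fun h => absurd h (by omega), fun h => absurd h (by omega)⟩
        rw [qpoly_self]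
      · -- n < m < l
        refine ⟨qpoly n m * qpoly m n, ?_, fun h => absurd h (by omega), fun _ => rfl,
          fun h => absurd h (by omega)⟩
        have key : qpoly l n = qpoly l m * qpoly m n := by
          rw [qpoly_ge l n hln h1.le, qpoly_ge l m hlm h3.le, qpoly_ge m n hnm.symm h2'.le,
            N_concat n m l h2'.le h3.le hnm hlm.symm]
        rw [key]; ring
  · -- m < n < l
    refine ⟨1, ?_, fun _ => rfl, fun h => absurd h (by omega), fun h => absurd h (by omega)⟩
    rw [one_mul, qpoly_ge n m hnm h2.le, qpoly_ge l n hln h1.le,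
      qpoly_ge l m hlm (h2.trans h1).le, mul_comm]
    exact N_concat m n l h2.le h1.le hnm.symm hln.symm
end

section
/- For fixed integers n, m with n ≡ m (mod 2), the set of polynomials {r^l_{n,m} : l ∈ ℤ, l ≡ m (mod 2)} is finite, where r^l_{n,m} := (q_{n,m} · q_{l,n}) / q_{l,m}. -/
open Polynomial

lemma qpoly_monic (n m : ℤ) : (qpoly n m).Monic := by
  unfold qpoly
  split_ifs
  · exact monic_one
  · exact monic_prod_of_monic _ _ fun _ _ => monic_X_add_C _
  · exact monic_prod_of_monic _ _ fun _ _ => monic_X_sub_C _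
  · exact monic_prod_of_monic _ _ fun _ _ => monic_X_add_C _

lemma qpoly_neg_neg (n m : ℤ) : qpoly (-n) (-m) = qpoly n m := by
  simp only [qpoly, neg_inj, neg_mul_neg, abs_neg]

/-- For `l = n + 2k > |n|`, both branches of `qpoly l n` are the product over the
half-integers `(n + 1)/2, …, (l - 1)/2`. -/
lemma qpoly_add_two_mul_self (n : ℤ) (k : ℕ) (h : |n| < n + 2 * k) :
    qpoly (n + 2 * k) n = ∏ j ∈ Finset.range k, (X + C (((n : ℂ) + 1) / 2 + j)) := by
  rcases le_or_gt 0 n with hn | hn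
  · have habs : |n| = n := abs_of_nonneg hn
    rw [habs] at h
    have hl : |n + 2 * (k : ℤ)| = n + 2 * k := abs_of_pos (by omega)
    rw [qpoly, if_neg (by omega), if_pos (mul_nonneg (by omega) hn), if_pos (by omega),
      hl, habs, show ((n + 2 * (k : ℤ) - n) / 2).toNat = k by omega]
  · have habs : |n| = -n := abs_of_neg hn
    rw [habs] at h
    have hl : |n + 2 * (k : ℤ)| = n + 2 * k := abs_of_pos (by omega)
    rw [qpoly, if_neg (by omega), if_neg (not_le.mpr (mul_neg_of_pos_of_neg (by omega) hn)),
      hl, habs, show ((n + 2 * (k : ℤ) + -n) / 2).toNat = k by omega,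
      ← Finset.prod_range_reflect]
    refine Finset.prod_congr rfl fun j hj => ?_
    have hjk := Finset.mem_range.mp hj
    rw [Nat.cast_sub (by omega), Nat.cast_sub (by omega)]
    push_cast
    ring_nf

lemma qpoly_add_two (n l : ℤ) (hl : |n| < l) (hpar : 2 ∣ l - n) :
    qpoly (l + 2) n = (X + C (((l : ℂ) + 1) / 2)) * qpoly l n := by
  have hn := le_abs_self n
  obtain ⟨k, rfl⟩ : ∃ k : ℕ, l = n + 2 * k := ⟨((l - n) / 2).toNat, by omega⟩
  rw [show n + 2 * (k : ℤ) + 2 = n + 2 * ((k + 1 : ℕ) : ℤ) by push_cast; ring,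
    qpoly_add_two_mul_self n _ (by omega), qpoly_add_two_mul_self n _ hl,
    Finset.prod_range_succ, mul_comm]
  push_cast
  ring_nf

/-- `{r^l_{n,m}}` if `q_{l,m} ∣ q_{n,m} · q_{l,n}`, and `∅` otherwise. -/
def rSet (n m l : ℤ) : Set (Polynomial ℂ) :=
  {r | qpoly n m * qpoly l n = r * qpoly l m}

lemma rSet_subsingleton (n m l : ℤ) : (rSet n m l).Subsingleton :=
  fun _ hr _ hs => mul_right_cancel₀ (qpoly_monic l m).ne_zero (hr.symm.trans hs)

lemma rSet_neg (n m l : ℤ) : rSet (-n) (-m) (-l) = rSet n m l := by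
  simp only [rSet, qpoly_neg_neg]

lemma rSet_add_two (n m l : ℤ) (hn : |n| < l) (hm : |m| < l) (hpn : 2 ∣ l - n)
    (hpm : 2 ∣ l - m) : rSet n m (l + 2) = rSet n m l := by
  ext r
  simp only [rSet, Set.mem_ofPred_eq, qpoly_add_two n l hn hpn, qpoly_add_two m l hm hpm,
    mul_left_comm (qpoly n m), mul_left_comm r, mul_right_inj' (X_add_C_ne_zero _)]

lemma rSet_eq_of_le (n m L l : ℤ) (hn : |n| < L) (hm : |m| < L) (hpn : 2 ∣ L - n)
    (hpm : 2 ∣ L - m) (hl : L ≤ l) (hpl : 2 ∣ l - L) : rSet n m l = rSet n m L := by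
  obtain ⟨k, rfl⟩ : ∃ k : ℕ, l = L + 2 * k := ⟨((l - L) / 2).toNat, by omega⟩
  induction k with
  | zero => simp
  | succ k ih =>
    rw [show L + 2 * ((k + 1 : ℕ) : ℤ) = L + 2 * k + 2 by push_cast; ring,
      rSet_add_two n m _ (by omega) (by omega) (by omega) (by omega),
      ih (by omega) (by omega)]

lemma rSet_eq_of_le_neg (n m L l : ℤ) (hn : |n| < L) (hm : |m| < L) (hpn : 2 ∣ L - n)
    (hpm : 2 ∣ L - m) (hl : l ≤ -L) (hpl : 2 ∣ l + L) : rSet n m l = rSet n m (-L) := by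
  rw [← rSet_neg n m l, ← rSet_neg n m (-L), neg_neg,
    rSet_eq_of_le (-n) (-m) L (-l) (by rwa [abs_neg]) (by rwa [abs_neg]) (by omega) (by omega)
      (by omega) (by omega)]

/-- For fixed `n ≡ m (mod 2)`, the set of polynomials `r^l_{n,m}` (for `l ≡ m (mod 2)`)
defined by `q_{n,m} · q_{l,n} = r^l_{n,m} · q_{l,m}` is finite. -/
theorem stmt8 (n m : ℤ) (hnm : n % 2 = m % 2) :
    {r : Polynomial ℂ | ∃ l : ℤ, l % 2 = m % 2 ∧
      qpoly n m * qpoly l n = r * qpoly l m}.Finite := by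
  set L : ℤ := n.natAbs + 2 * m.natAbs + 2
  have hn : |n| < L := by rw [Int.abs_eq_natAbs]; omega
  have hm : |m| < L := by rw [Int.abs_eq_natAbs]; omega
  have hpn : 2 ∣ L - n := by omega
  have hpm : 2 ∣ L - m := by omega
  refine ((Set.finite_Icc (-L) L).biUnion fun l _ => (rSet_subsingleton n m l).finite).subset ?_
  rintro r ⟨l, hpl, hr⟩
  change r ∈ rSet n m l at hr
  by_cases hlL : L ≤ l
  · rw [rSet_eq_of_le n m L l hn hm hpn hpm hlL (by omega)] at hr
    exact Set.mem_biUnion ⟨by omega, le_rfl⟩ hr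
  by_cases hlL' : l ≤ -L
  · rw [rSet_eq_of_le_neg n m L l hn hm hpn hpm hlL' (by omega)] at hr
    exact Set.mem_biUnion ⟨le_rfl, by omega⟩ hr
  exact Set.mem_biUnion ⟨by omega, by omega⟩ hr
end

section
/- Let p be a nonzero polynomial on ℂ² with top homogeneous component p_k, and choose v ∈ ℂ² with |v| = 1 and p_k(v) ≠ 0. Then there is a constant C_p = 1/|p_k(v)| such that for every entire function f on ℂ² and every λ ∈ ℂ²: |f(λ)| ≤ C_p · sup_{|μ| ≤ 1} |p(λ + μ) f(λ + μ)|. -/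
/-!
Restrict `p` and `f` to the complex line `z ↦ λ + z v`. The restriction `q` of `p` is a
polynomial in one variable whose leading coefficient is `p_k(v)`. Writing `q` as its leading
coefficient times the product of the `z - r` over its roots, each factor has the same modulus on
the unit circle as an entire function `b_r` with `|b_r(0)| ≥ 1` (`z - r` itself if `|r| ≥ 1`,
`1 - r̄ z` otherwise). The maximum modulus principle applied to `f` times these factors then
gives `|p_k(v)| |f(λ)| ≤ max_{|z| = 1} |q(z) f(λ + z v)|`.
-/

open Polynomial Metric ComplexConjugate

theorem Polynomial.coeff_prod_sum_of_natDegree_le {R ι : Type*} [CommSemiring R] (s : Finset ι)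
    (f : ι → R[X]) (d : ι → ℕ) (h : ∀ i ∈ s, (f i).natDegree ≤ d i) :
    (∏ i ∈ s, f i).coeff (∑ i ∈ s, d i) = ∏ i ∈ s, (f i).coeff (d i) := by
  classical
  induction s using Finset.induction_on with
  | empty => simp
  | insert a s ha ih =>
    have hs : ∀ i ∈ s, (f i).natDegree ≤ d i := fun i hi => h i (Finset.mem_insert_of_mem hi)
    rw [Finset.prod_insert ha, Finset.sum_insert ha, Finset.prod_insert ha,
      coeff_mul_add_eq_of_natDegree_le (h a (Finset.mem_insert_self a s))
        ((natDegree_prod_le _ _).trans (Finset.sum_le_sum hs)), ih hs]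

namespace MvPolynomial

variable {σ R : Type*} [CommRing R]

noncomputable def restrictLine (x v : σ → R) : MvPolynomial σ R →ₐ[R] R[X] :=
  aeval fun i => Polynomial.C (x i) + Polynomial.C (v i) * Polynomial.X

variable (x v : σ → R)

theorem eval_restrictLine (p : MvPolynomial σ R) (t : R) :
    (restrictLine x v p).eval t = eval (x + t • v) p := by
  induction p using MvPolynomial.induction_on with
  | C a => simp [restrictLine]
  | add p q hp hq => simp_all [restrictLine]
  | mul_X p i hp => simp_all [restrictLine]; ring

theorem restrictLine_monomial (m : σ →₀ ℕ) (c : R) :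
    restrictLine x v (monomial m c) =
      Polynomial.C c *
        ∏ i ∈ m.support, (Polynomial.C (x i) + Polynomial.C (v i) * Polynomial.X) ^ m i := by
  rw [restrictLine, aeval_monomial, Finsupp.prod]
  rfl

theorem natDegree_restrictLine_monomial_le (m : σ →₀ ℕ) (c : R) :
    (restrictLine x v (monomial m c)).natDegree ≤ m.degree := by
  rw [restrictLine_monomial, Finsupp.degree_apply]
  refine (natDegree_C_mul_le _ _).trans <| (natDegree_prod_le _ _).trans <|
    Finset.sum_le_sum fun i _ => ?_
  exact (natDegree_pow_le_of_le _ (by compute_degree)).trans_eq (mul_one _)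

theorem coeff_restrictLine_monomial_degree (m : σ →₀ ℕ) (c : R) :
    (restrictLine x v (monomial m c)).coeff m.degree = eval v (monomial m c) := by
  have hlin : ∀ i, (Polynomial.C (x i) + Polynomial.C (v i) * Polynomial.X).natDegree ≤ 1 :=
    fun i => by compute_degree
  rw [restrictLine_monomial, Finsupp.degree_apply, Polynomial.coeff_C_mul, eval_monomial,
    Finsupp.prod, coeff_prod_sum_of_natDegree_le _ _ _ fun i _ =>
      (natDegree_pow_le_of_le _ (hlin i)).trans_eq (mul_one _)]
  congr 1
  refine Finset.prod_congr rfl fun i _ => ?_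
  simpa using coeff_pow_of_natDegree_le (m := m i) (hlin i)

theorem natDegree_restrictLine_le (p : MvPolynomial σ R) :
    (restrictLine x v p).natDegree ≤ p.totalDegree := by
  conv_lhs => rw [p.as_sum, map_sum]
  exact natDegree_sum_le_of_forall_le _ _ fun m hm =>
    (natDegree_restrictLine_monomial_le x v m _).trans (le_totalDegree hm)

theorem coeff_restrictLine_of_totalDegree_le (p : MvPolynomial σ R) {n : ℕ}
    (hn : p.totalDegree ≤ n) :
    (restrictLine x v p).coeff n = eval v (homogeneousComponent n p) := by
  classical
  conv_lhs => rw [p.as_sum, map_sum, finsetSum_coeff]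
  rw [homogeneousComponent_apply, map_sum, Finset.sum_filter]
  refine Finset.sum_congr rfl fun m hm => ?_
  by_cases hmn : m.degree = n
  · rw [if_pos hmn, ← hmn, coeff_restrictLine_monomial_degree]
  · rw [if_neg hmn]
    refine coeff_eq_zero_of_natDegree_lt <|
      (natDegree_restrictLine_monomial_le x v m _).trans_lt ?_
    exact lt_of_le_of_ne ((le_totalDegree hm).trans hn) hmn

theorem leadingCoeff_restrictLine (p : MvPolynomial σ R)
    (h : eval v (homogeneousComponent p.totalDegree p) ≠ 0) :
    (restrictLine x v p).leadingCoeff = eval v (homogeneousComponent p.totalDegree p) := by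
  have hcoeff := coeff_restrictLine_of_totalDegree_le x v p le_rfl
  have hdeg : (restrictLine x v p).natDegree = p.totalDegree :=
    (natDegree_restrictLine_le x v p).antisymm (le_natDegree_of_ne_zero (hcoeff ▸ h))
  rw [leadingCoeff, hdeg, hcoeff]

end MvPolynomial

theorem Complex.exists_differentiable_norm_eq_norm_sub_on_circle (r : ℂ) :
    ∃ b : ℂ → ℂ, Differentiable ℂ b ∧ 1 ≤ ‖b 0‖ ∧ ∀ z : ℂ, ‖z‖ = 1 → ‖b z‖ = ‖z - r‖ := by
  by_cases hr : 1 ≤ ‖r‖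
  · exact ⟨(· - r), by fun_prop, by simpa using hr, fun _ _ => rfl⟩
  refine ⟨fun z => 1 - conj r * z, by fun_prop, by simp, fun z hz => ?_⟩
  -- on the unit circle `conj z = z⁻¹`, so `1 - conj r * z = conj ((z - r) * conj z)`
  have hzz : z * conj z = 1 := by
    rw [Complex.mul_conj, Complex.normSq_eq_norm_sq, hz]; norm_num
  calc ‖1 - conj r * z‖ = ‖conj ((z - r) * conj z)‖ := by
        rw [sub_mul, hzz, map_sub, map_one, map_mul, Complex.conj_conj, mul_comm]
    _ = ‖z - r‖ := by rw [Complex.norm_conj, norm_mul, Complex.norm_conj, hz, mul_one]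

theorem Complex.exists_differentiable_norm_eq_norm_multiset_prod_on_circle (s : Multiset ℂ) :
    ∃ b : ℂ → ℂ, Differentiable ℂ b ∧ 1 ≤ ‖b 0‖ ∧
      ∀ z : ℂ, ‖z‖ = 1 → ‖b z‖ = ‖(s.map (z - ·)).prod‖ := by
  induction s using Multiset.induction_on with
  | empty => exact ⟨1, differentiable_const 1, by simp, by simp⟩
  | cons r s ih =>
    obtain ⟨b, hb, hb0, hbz⟩ := ih
    obtain ⟨c, hc, hc0, hcz⟩ := exists_differentiable_norm_eq_norm_sub_on_circle r
    refine ⟨c * b, hc.mul hb, ?_, fun z hz => ?_⟩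
    · simpa using one_le_mul_of_one_le_of_one_le hc0 hb0
    · simp [hbz z hz, hcz z hz]

theorem Polynomial.exists_differentiable_norm_eq_norm_eval_on_circle (q : ℂ[X]) :
    ∃ b : ℂ → ℂ, Differentiable ℂ b ∧ ‖q.leadingCoeff‖ ≤ ‖b 0‖ ∧
      ∀ z : ℂ, ‖z‖ = 1 → ‖b z‖ = ‖q.eval z‖ := by
  obtain ⟨b, hb, hb0, hbz⟩ :=
    Complex.exists_differentiable_norm_eq_norm_multiset_prod_on_circle q.roots
  refine ⟨fun z => q.leadingCoeff * b z, (differentiable_const _).mul hb, ?_, fun z hz => ?_⟩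
  · simpa using le_mul_of_one_le_right (norm_nonneg _) hb0
  · rw [(IsAlgClosed.splits q).eval_eq_prod_roots, norm_mul, norm_mul, hbz z hz]

theorem Polynomial.norm_leadingCoeff_mul_norm_le_of_norm_eval_mul_le_on_circle (q : ℂ[X])
    {g : ℂ → ℂ} (hg : Differentiable ℂ g) {C : ℝ}
    (hC : ∀ z : ℂ, ‖z‖ = 1 → ‖q.eval z * g z‖ ≤ C) :
    ‖q.leadingCoeff‖ * ‖g 0‖ ≤ C := by
  obtain ⟨b, hb, hb0, hbz⟩ := q.exists_differentiable_norm_eq_norm_eval_on_circle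
  have hmax : ‖b 0 * g 0‖ ≤ C := by
    refine Complex.norm_le_of_forall_mem_frontier_norm_le isBounded_ball
      (hb.mul hg).diffContOnCl (fun z hz => ?_) (subset_closure (mem_ball_self one_pos))
    rw [frontier_ball 0 one_ne_zero, mem_sphere_zero_iff_norm] at hz
    simpa [norm_mul, hbz z hz] using hC z hz
  calc ‖q.leadingCoeff‖ * ‖g 0‖ ≤ ‖b 0‖ * ‖g 0‖ := by gcongr
    _ = ‖b 0 * g 0‖ := (norm_mul _ _).symm
    _ ≤ C := hmax

theorem stmt13_general (p : MvPolynomial (Fin 2) ℂ)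
    (v : EuclideanSpace ℂ (Fin 2)) (hv : ‖v‖ = 1)
    (hpk : MvPolynomial.eval (fun i => v i)
      (MvPolynomial.homogeneousComponent p.totalDegree p) ≠ 0)
    (f : EuclideanSpace ℂ (Fin 2) → ℂ) (hf : Differentiable ℂ f)
    (lam : EuclideanSpace ℂ (Fin 2)) :
    ‖f lam‖ ≤ ‖MvPolynomial.eval (fun i => v i)
        (MvPolynomial.homogeneousComponent p.totalDegree p)‖⁻¹ *
      sSup {x : ℝ | ∃ μ : EuclideanSpace ℂ (Fin 2), ‖μ‖ ≤ 1 ∧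
        x = ‖MvPolynomial.eval (fun i => lam i + μ i) p * f (lam + μ)‖} := by
  set S := {x : ℝ | ∃ μ : EuclideanSpace ℂ (Fin 2), ‖μ‖ ≤ 1 ∧
    x = ‖MvPolynomial.eval (fun i => lam i + μ i) p * f (lam + μ)‖}
  have hbdd : BddAbove S := by
    have hcont : Continuous fun μ : EuclideanSpace ℂ (Fin 2) =>
        ‖MvPolynomial.eval (fun i => lam i + μ i) p * f (lam + μ)‖ :=
      (((MvPolynomial.continuous_eval p).comp (by fun_prop)).mul
        (hf.continuous.comp (by fun_prop))).norm
    refine (((isCompact_closedBall 0 1).image hcont).bddAbove).mono ?_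
    rintro _ ⟨μ, hμ, rfl⟩
    exact ⟨μ, mem_closedBall_zero_iff.2 hμ, rfl⟩
  have hline : ∀ z : ℂ, ‖z‖ = 1 →
      ‖(MvPolynomial.restrictLine lam v p).eval z * f (lam + z • v)‖ ≤ sSup S := by
    refine fun z hz => le_csSup hbdd ⟨z • v, by rw [norm_smul, hz, hv, one_mul], ?_⟩
    rw [MvPolynomial.eval_restrictLine]
    rfl
  have hestimate := (MvPolynomial.restrictLine lam v p)
    |>.norm_leadingCoeff_mul_norm_le_of_norm_eval_mul_le_on_circle
      (g := fun z => f (lam + z • v)) (by fun_prop) hline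
  rw [MvPolynomial.leadingCoeff_restrictLine _ _ p hpk] at hestimate
  exact (le_inv_mul_iff₀ (norm_pos_iff.2 hpk)).2 (by simpa using hestimate)

/-- Two-variable maximum-principle estimate: for a nonzero polynomial `p` on `ℂ²` with top
homogeneous component `p_k`, `v` with `|v| = 1` and `p_k(v) ≠ 0`, and any entire `f`,
`|f λ| ≤ |p_k(v)|⁻¹ · sup_{|μ| ≤ 1} |p(λ+μ) f(λ+μ)|` for all `λ ∈ ℂ²`. -/
theorem stmt13 (p : MvPolynomial (Fin 2) ℂ) (hp : p ≠ 0)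
    (v : EuclideanSpace ℂ (Fin 2)) (hv : ‖v‖ = 1)
    (hpk : MvPolynomial.eval (fun i => v i)
      (MvPolynomial.homogeneousComponent p.totalDegree p) ≠ 0)
    (f : EuclideanSpace ℂ (Fin 2) → ℂ) (hf : Differentiable ℂ f)
    (lam : EuclideanSpace ℂ (Fin 2)) :
    ‖f lam‖ ≤ ‖MvPolynomial.eval (fun i => v i)
        (MvPolynomial.homogeneousComponent p.totalDegree p)‖⁻¹ *
      sSup {x : ℝ | ∃ μ : EuclideanSpace ℂ (Fin 2), ‖μ‖ ≤ 1 ∧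
        x = ‖MvPolynomial.eval (fun i => lam i + μ i) p * f (lam + μ)‖} :=
  stmt13_general p v hv hpk f hf lam
end

section
/- Let p be a nonzero polynomial in one complex variable of degree k with leading coefficient a_k. Then for every entire function f : ℂ → ℂ and every λ ∈ ℂ: |f(λ)| ≤ |a_k|^{-1} · sup_{|z|=1} |f(λ+z) p(λ+z)|, i.e. the constant |a_k|^{-1} is independent of λ. -/
/-!
Write `p = a ∏ (X - r)` over its roots. On the unit circle `|z - r| = |1 - r̄ z|`, so the entire
function `f(z) · a ∏ (1 - r̄ z)` has the same modulus there as `f p`, while at `0` it equals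
`a f(0)`. The maximum principle on the unit disc therefore gives `|a| |f(0)| ≤ sup_{|z|=1} |f p|`.
The estimate at `λ` is this one applied to `f(λ + ·)` and the Taylor shift `p(λ + ·)`, which has
the same leading coefficient.
-/

open Polynomial Metric ComplexConjugate

lemma Complex.norm_one_sub_conj_mul_eq_norm_sub {z : ℂ} (hz : ‖z‖ = 1) (r : ℂ) :
    ‖1 - conj r * z‖ = ‖z - r‖ := by
  have hzz : conj z * z = 1 := by
    rw [Complex.conj_mul', hz]; norm_num
  calc ‖1 - conj r * z‖ = ‖conj (z - r) * z‖ := by rw [map_sub, sub_mul, hzz]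
    _ = ‖z - r‖ := by rw [norm_mul, hz, mul_one, Complex.norm_conj]

/-- Its roots are the reflections `1 / r̄` in the unit circle of the nonzero roots `r` of `p`. -/
noncomputable def Polynomial.circleReflection (p : ℂ[X]) : ℂ[X] :=
  C p.leadingCoeff * (p.roots.map fun r => 1 - C (conj r) * X).prod

namespace Polynomial

lemma eval_circleReflection (p : ℂ[X]) (z : ℂ) :
    p.circleReflection.eval z = p.leadingCoeff * (p.roots.map fun r => 1 - conj r * z).prod := by
  simp [circleReflection, eval_multiset_prod, Multiset.map_map]

lemma eval_circleReflection_zero (p : ℂ[X]) : p.circleReflection.eval 0 = p.leadingCoeff := by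
  simp [eval_circleReflection]

lemma norm_eval_circleReflection {z : ℂ} (hz : ‖z‖ = 1) (p : ℂ[X]) :
    ‖p.circleReflection.eval z‖ = ‖p.eval z‖ := by
  have norm_prod (g : ℂ → ℂ) : ‖(p.roots.map g).prod‖ = (p.roots.map fun r => ‖g r‖).prod := by
    simpa [Multiset.map_map] using map_multiset_prod (normHom (α := ℂ)) (p.roots.map g)
  rw [eval_circleReflection, (IsAlgClosed.splits p).eval_eq_prod_roots, norm_mul, norm_mul,
    norm_prod, norm_prod]
  simp only [Complex.norm_one_sub_conj_mul_eq_norm_sub hz]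

end Polynomial

lemma norm_mul_leadingCoeff_le_of_forall_norm_eq_one {f : ℂ → ℂ} (hf : Differentiable ℂ f)
    (p : ℂ[X]) {C : ℝ} (hC : ∀ z : ℂ, ‖z‖ = 1 → ‖f z * p.eval z‖ ≤ C) :
    ‖f 0‖ * ‖p.leadingCoeff‖ ≤ C := by
  have hg : Differentiable ℂ fun z => f z * p.circleReflection.eval z :=
    hf.mul p.circleReflection.differentiable
  have hmax := Complex.norm_le_of_forall_mem_frontier_norm_le (C := C)
    (isBounded_ball (x := 0) (r := 1)) hg.diffContOnCl (fun z hz => ?_) (subset_closure (mem_ball_self one_pos))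
  · simpa [eval_circleReflection_zero] using hmax
  rw [frontier_ball (0 : ℂ) one_ne_zero, mem_sphere_zero_iff_norm] at hz
  simpa [norm_eval_circleReflection hz] using hC z hz

lemma bddAbove_norm_mul_eval_sphere {f : ℂ → ℂ} (hf : Continuous f) (p : ℂ[X]) (lam : ℂ) :
    BddAbove {x : ℝ | ∃ z : ℂ, ‖z‖ = 1 ∧ x = ‖f (lam + z) * p.eval (lam + z)‖} := by
  have hcont : Continuous fun z => ‖f (lam + z) * p.eval (lam + z)‖ := by fun_prop
  refine ((isCompact_sphere (0 : ℂ) 1).image hcont).bddAbove.mono ?_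
  rintro x ⟨z, hz, rfl⟩
  exact ⟨z, mem_sphere_zero_iff_norm.mpr hz, rfl⟩

/-- Translation-invariant maximum-principle estimate: for a nonzero one-variable polynomial
`p` with leading coefficient `a_k` and any entire `f`,
`|f λ| ≤ |a_k|⁻¹ · sup_{|z|=1} |f(λ+z) p(λ+z)|` for all `λ`, with constant independent of `λ`. -/
theorem stmt14 (p : Polynomial ℂ) (hp : p ≠ 0) (f : ℂ → ℂ) (hf : Differentiable ℂ f)
    (lam : ℂ) :
    ‖f lam‖ ≤ ‖p.leadingCoeff‖⁻¹ *
      sSup {x : ℝ | ∃ z : ℂ, ‖z‖ = 1 ∧ x = ‖f (lam + z) * p.eval (lam + z)‖} := by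
  have hlc : 0 < ‖p.leadingCoeff‖ := norm_pos_iff.mpr (leadingCoeff_ne_zero.mpr hp)
  rw [le_inv_mul_iff₀' hlc, ← leadingCoeff_taylor (r := lam)]
  have hshift : Differentiable ℂ fun z => f (lam + z) := hf.comp (differentiable_id.const_add lam)
  simpa using norm_mul_leadingCoeff_le_of_forall_norm_eq_one hshift (taylor lam p)
    fun z hz => le_csSup (bddAbove_norm_mul_eval_sphere hf.continuous p lam)
      ⟨z, hz, by rw [taylor_eval, add_comm]⟩
end

section
/- Let a₁, …, a_d be polynomials in ℂ[λ²] (even polynomials) not all zero, with greatest common divisor p̃, and suppose b ∈ Hol(λ²) (an even entire function) can be written b = Σ_j a_j h_j for some even entire functions h_j. Then b is divisible by p̃ in Hol(λ²): there exists an even entire function β with b = β · p̃, and by Bézout's identity there exist even polynomials R_j with Σ_j a_j R_j = p̃, so that setting h̃_j := β · R_j gives even entire functions with Σ_j a_j h̃_j = b. -/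
namespace EvenAux
open Polynomial

noncomputable def phi : Polynomial ℂ →ₐ[ℂ] Polynomial ℂ := aeval (-X)

lemma phi_apply (p : ℂ[X]) : phi p = p.comp (-X) := by
  simp [phi, aeval_def, comp, algebraMap_eq]

-- odd coefficient of an even polynomial vanishes
lemma coeff_one_eq_zero (p : ℂ[X]) (hp : p.comp (-X) = p) : p.coeff 1 = 0 := by
  have hD : Polynomial.derivative p = -((Polynomial.derivative p).comp (-X)) := by
    conv_lhs => rw [← hp]
    rw [derivative_comp]
    simp [mul_comm]
  have h0 : (Polynomial.derivative p).eval 0 = 0 := by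
    have := congrArg (eval 0) hD
    simp [eval_comp] at this
    have h3 : Polynomial.eval 0 (Polynomial.derivative p) = -Polynomial.eval 0 (Polynomial.derivative p) := by simpa using this
    have h4 : (2:ℂ) * Polynomial.eval 0 (Polynomial.derivative p) = 0 := by linear_combination h3
    simpa using h4
  have hc := Polynomial.coeff_derivative p 0
  rw [coeff_zero_eq_eval_zero, h0] at hc
  simpa using hc.symm

lemma even_generator : ∀ n : ℕ, ∀ (d : ℕ) (a : Fin d → ℂ[X]),
    (∀ j, (a j).comp (-X) = a j) → (∃ j, a j ≠ 0) →
    ∀ g : ℂ[X], g.Monic → Ideal.span (Set.range a) = Ideal.span {g} →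
    g.natDegree = n → g.comp (-X) = g := by
  intro n
  induction n using Nat.strong_induction_on with
  | _ n IH =>
    intro d a ha hne g hg hspan hdeg
    have hfa : ⇑phi ∘ a = a := by funext j; simp [Function.comp, phi_apply, ha j]
    have hgI : Ideal.map phi (Ideal.span (Set.range a)) = Ideal.span (Set.range a) := by
      rw [Ideal.map_span, ← Set.range_comp, hfa]
    have hspan2 : Ideal.span {g.comp (-X)} = Ideal.span {g} := by
      rw [← phi_apply, ← Set.image_singleton, ← Ideal.map_span, ← hspan, hgI, hspan]
    have hassoc : Associated g (g.comp (-X)) :=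
      (Ideal.span_singleton_eq_span_singleton.mp hspan2).symm
    obtain ⟨u, hu⟩ := hassoc
    obtain ⟨r, hr, hCr⟩ := Polynomial.isUnit_iff.mp u.isUnit
    have hkey : g.comp (-X) = g * C r := by rw [← hu, ← hCr]
    have hg0 : g ≠ 0 := hg.ne_zero
    have hr1 : r = (-1 : ℂ) ^ n := by
      have h1 : (g.comp (-X)).leadingCoeff = (-1 : ℂ) ^ n := by
        rw [leadingCoeff_comp (by simp)]
        simp [hg.leadingCoeff, hdeg]
      rw [hkey] at h1
      simpa [leadingCoeff_mul, hg.leadingCoeff] using h1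
    rcases Nat.even_or_odd n with he | ho
    · rw [hkey, hr1, he.neg_one_pow]; simp
    · exfalso
      have hgneg : g.comp (-X) = -g := by
        rw [hkey, hr1, ho.neg_one_pow]; simp [mul_comm]
      have hg00 : g.coeff 0 = 0 := by
        have h1 := congrArg (fun p => Polynomial.eval (0:ℂ) p) hgneg
        simp [eval_comp] at h1
        rw [coeff_zero_eq_eval_zero]
        have h3 : Polynomial.eval 0 g = -Polynomial.eval 0 g := by simpa using h1
        have h4 : (2:ℂ) * Polynomial.eval 0 g = 0 := by linear_combination h3
        simpa using h4
      have hXg : X ∣ g := X_dvd_iff.mpr hg00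
      have hX2a : ∀ j, (X:ℂ[X])^2 ∣ a j := by
        intro j
        have hgaj : g ∣ a j := by
          rw [← Ideal.mem_span_singleton, ← hspan]
          exact Ideal.subset_span ⟨j, rfl⟩
        have hXa : X ∣ a j := hXg.trans hgaj
        rw [X_pow_dvd_iff]
        intro k hk
        interval_cases k
        · exact X_dvd_iff.mp hXa
        · exact coeff_one_eq_zero (a j) (ha j)
      have hX2g : (X:ℂ[X])^2 ∣ g := by
        rw [← Ideal.mem_span_singleton]
        have hle : Ideal.span (Set.range a) ≤ Ideal.span {(X:ℂ[X])^2} := by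
          rw [Ideal.span_le]
          rintro _ ⟨j, rfl⟩
          exact Ideal.mem_span_singleton.mpr (hX2a j)
        apply hle
        rw [hspan]
        exact Ideal.subset_span rfl
      obtain ⟨m, hm⟩ := hX2g
      choose b hbspec using hX2a
      have hX2ne : (X:ℂ[X])^2 ≠ 0 := pow_ne_zero 2 Polynomial.X_ne_zero
      have hmmonic : m.Monic := (monic_X_pow 2).of_mul_monic_left (hm ▸ hg)
      have hmdeg : m.natDegree = n - 2 ∧ 2 + m.natDegree = n := by
        have hd2 := hdeg
        rw [hm, (monic_X_pow 2).natDegree_mul hmmonic, natDegree_X_pow] at hd2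
        omega
      have hbeven : ∀ j, (b j).comp (-X) = b j := by
        intro j
        have h1 : (X:ℂ[X])^2 * (b j).comp (-X) = (X:ℂ[X])^2 * b j := by
          have h2 := ha j
          rw [hbspec j] at h2
          rw [mul_comp, X_pow_comp] at h2
          linear_combination h2
        exact mul_left_cancel₀ hX2ne h1
      have hbne : ∃ j, b j ≠ 0 := by
        obtain ⟨j, hj⟩ := hne
        exact ⟨j, fun hbj => hj (by rw [hbspec j, hbj, mul_zero])⟩
      have hmdvd : ∀ j, m ∣ b j := by
        intro j
        have hgaj : g ∣ a j := by
          rw [← Ideal.mem_span_singleton, ← hspan]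
          exact Ideal.subset_span ⟨j, rfl⟩
        obtain ⟨t, ht⟩ := hgaj
        refine ⟨t, mul_left_cancel₀ hX2ne ?_⟩
        rw [← hbspec j, ht, hm]; ring
      have hspanb : Ideal.span (Set.range b) = Ideal.span {m} := by
        apply le_antisymm
        · rw [Ideal.span_le]
          rintro _ ⟨j, rfl⟩
          exact Ideal.mem_span_singleton.mpr (hmdvd j)
        · rw [Ideal.span_le, Set.singleton_subset_iff]
          have hgmem : g ∈ Ideal.span (Set.range a) := by
            rw [hspan]; exact Ideal.subset_span rfl
          obtain ⟨s, hs⟩ := (Submodule.mem_span_range_iff_exists_fun ℂ[X]).mp hgmem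
          have heq : (X:ℂ[X])^2 * (∑ i, s i * b i) = (X:ℂ[X])^2 * m := by
            rw [← hm, ← hs, Finset.mul_sum]
            refine Finset.sum_congr rfl fun i _ => ?_
            rw [smul_eq_mul, hbspec i]; ring
          have hmsum : (∑ i, s i * b i) = m := mul_left_cancel₀ hX2ne heq
          exact (Submodule.mem_span_range_iff_exists_fun ℂ[X]).mpr ⟨s, by simpa [smul_eq_mul] using hmsum⟩
      have hme : m.comp (-X) = m :=
        IH (n-2) (by omega) d b hbeven hbne m hmmonic hspanb hmdeg.1
      have hmneg : m.comp (-X) = -m := by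
        have h1 : (X:ℂ[X])^2 * m.comp (-X) = (X:ℂ[X])^2 * (-m) := by
          have h2 := hgneg
          rw [hm, mul_comp, X_pow_comp] at h2
          linear_combination h2
        exact mul_left_cancel₀ hX2ne h1
      rw [hme] at hmneg
      have h2m : (2:ℂ[X]) * m = 0 := by linear_combination hmneg
      rcases mul_eq_zero.mp h2m with h | h
      · exact two_ne_zero h
      · exact hmmonic.ne_zero h

-- even as function iff even as polynomial
lemma even_comp_of_eval' (p : ℂ[X]) (h : ∀ z : ℂ, p.eval (-z) = p.eval z) :
    p.comp (-X) = p := by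
  apply Polynomial.funext; intro r; simp [eval_comp, h r]

lemma eval_even_of_comp' (p : ℂ[X]) (h : p.comp (-X) = p) (z : ℂ) :
    p.eval (-z) = p.eval z := by
  conv_rhs => rw [← h]
  simp [eval_comp]

end EvenAux

open Polynomial EvenAux in
/-- Bézout/divisibility in the even setting: if `a₁, …, a_d` are even polynomials, not all
zero, with gcd `p̃` in the ring of even polynomials, and the even entire function
`b = Σ_j a_j h_j` for even entire `h_j`, then `b = β · p̃` for an even entire `β`, and there
are even polynomials `R_j` with `Σ_j a_j R_j = p̃`, so that `h̃_j := β · R_j` are even entire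
with `Σ_j a_j h̃_j = b`. -/
theorem stmt17 (d : ℕ) (a : Fin d → Polynomial ℂ)
    (ha_even : ∀ j, ∀ z : ℂ, (a j).eval (-z) = (a j).eval z)
    (ha_ne : ∃ j, a j ≠ 0)
    (ptilde : Polynomial ℂ)
    (hpt_even : ∀ z : ℂ, ptilde.eval (-z) = ptilde.eval z)
    (hpt_dvd : ∀ j, ptilde ∣ a j)
    (hpt_gcd : ∀ q : Polynomial ℂ, (∀ z : ℂ, q.eval (-z) = q.eval z) →
      (∀ j, q ∣ a j) → q ∣ ptilde)
    (h : Fin d → ℂ → ℂ)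
    (hh : ∀ j, Differentiable ℂ (h j) ∧ ∀ z : ℂ, h j (-z) = h j z)
    (b : ℂ → ℂ) (hb : ∀ z : ℂ, b z = ∑ j, (a j).eval z * h j z) :
    ∃ β : ℂ → ℂ, Differentiable ℂ β ∧ (∀ z : ℂ, β (-z) = β z) ∧
      (∀ z : ℂ, b z = β z * ptilde.eval z) ∧
      ∃ R : Fin d → Polynomial ℂ,
        (∀ j, ∀ z : ℂ, (R j).eval (-z) = (R j).eval z) ∧
        (∑ j, a j * R j = ptilde) ∧
        ∀ z : ℂ, ∑ j, (a j).eval z * (β z * (R j).eval z) = b z := by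
  classical
  have hpt0 : ptilde ≠ 0 := by
    obtain ⟨j, hj⟩ := ha_ne
    intro hp
    exact hj (by simpa [hp] using hpt_dvd j)
  -- a j = ptilde * c j, with c j even
  choose c hc using hpt_dvd
  have hceven : ∀ j, ∀ z : ℂ, (c j).eval (-z) = (c j).eval z := by
    intro j
    have h1 : ptilde * (c j).comp (-X) = ptilde * c j := by
      have h2 := even_comp_of_eval' (a j) (ha_even j)
      rw [hc j, mul_comp, even_comp_of_eval' ptilde hpt_even] at h2
      exact h2
    exact eval_even_of_comp' _ (mul_left_cancel₀ hpt0 h1)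
  -- the entire even function β
  set β : ℂ → ℂ := fun z => ∑ j, (c j).eval z * h j z with hβ
  have hβdiff : Differentiable ℂ β := by
    apply Differentiable.fun_sum
    intro j _
    exact ((c j).differentiable).mul (hh j).1
  have hβeven : ∀ z : ℂ, β (-z) = β z := by
    intro z
    simp only [hβ]
    refine Finset.sum_congr rfl fun j _ => ?_
    rw [hceven j z, (hh j).2 z]
  have hbβ : ∀ z : ℂ, b z = β z * ptilde.eval z := by
    intro z
    rw [hb z, hβ, Finset.sum_mul]
    refine Finset.sum_congr rfl fun j _ => ?_
    rw [hc j, eval_mul]; ring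
  refine ⟨β, hβdiff, hβeven, hbβ, ?_⟩
  -- Bézout part: monic generator of the ideal spanned by the a j
  set I := Ideal.span (Set.range a) with hI
  set g₀ := Submodule.IsPrincipal.generator I with hg₀
  have hg₀span : Ideal.span {g₀} = I := Ideal.span_singleton_generator I
  have hg₀0 : g₀ ≠ 0 := by
    intro hz
    obtain ⟨j, hj⟩ := ha_ne
    have haj : a j ∈ I := Ideal.subset_span ⟨j, rfl⟩
    rw [← hg₀span, hz, Ideal.span_singleton_eq_bot.mpr rfl] at haj
    exact hj (by simpa using haj)
  set g := normalize g₀ with hg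
  have hgmonic : g.Monic := monic_normalize hg₀0
  have hgspan : Ideal.span (Set.range a) = Ideal.span {g} := by
    rw [← hI, ← hg₀span]
    exact (Ideal.span_singleton_eq_span_singleton.mpr (normalize_associated g₀)).symm
  have hgeven : g.comp (-X) = g :=
    even_generator g.natDegree d a (fun j => even_comp_of_eval' (a j) (ha_even j))
      ha_ne g hgmonic hgspan rfl
  have hgdvd : ∀ j, g ∣ a j := by
    intro j
    rw [← Ideal.mem_span_singleton, ← hgspan]
    exact Ideal.subset_span ⟨j, rfl⟩
  have hgpt : g ∣ ptilde := hpt_gcd g (eval_even_of_comp' g hgeven) hgdvd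
  have hptmem : ptilde ∈ Ideal.span (Set.range a) := by
    rw [hgspan, Ideal.mem_span_singleton]
    exact hgpt
  obtain ⟨s, hs⟩ := (Submodule.mem_span_range_iff_exists_fun ℂ[X]).mp hptmem
  -- symmetrize the Bézout coefficients
  set R : Fin d → ℂ[X] := fun j => C (2⁻¹ : ℂ) * (s j + (s j).comp (-X)) with hR
  have hReven : ∀ j, ∀ z : ℂ, (R j).eval (-z) = (R j).eval z := by
    intro j
    apply eval_even_of_comp'
    rw [hR]
    simp only [mul_comp, C_comp, add_comp]
    rw [comp_assoc]
    simp [neg_comp, X_comp]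
    ring
  have hsum1 : ∑ j, a j * s j = ptilde := by
    rw [← hs]; refine Finset.sum_congr rfl fun j _ => ?_; rw [smul_eq_mul]; ring
  have hsum2 : ∑ j, a j * (s j).comp (-X) = ptilde := by
    have h1 := congrArg (fun p => p.comp (-X)) hsum1
    rw [← even_comp_of_eval' ptilde hpt_even, ← h1]
    rw [sum_comp]
    refine Finset.sum_congr rfl fun j _ => ?_
    rw [mul_comp, even_comp_of_eval' (a j) (ha_even j)]
  have hsumR : ∑ j, a j * R j = ptilde := by
    have h1 : ∑ j, a j * R j
        = C (2⁻¹ : ℂ) * (∑ j, a j * s j + ∑ j, a j * (s j).comp (-X)) := by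
      rw [← Finset.sum_add_distrib, Finset.mul_sum]
      refine Finset.sum_congr rfl fun j _ => ?_
      rw [hR]; ring
    rw [h1, hsum1, hsum2]
    have h2 : (C (2⁻¹:ℂ)) * 2 = 1 := by
      rw [← map_ofNat (C : ℂ →+* ℂ[X]) 2, ← C_mul]
      norm_num
    rw [← two_mul, ← mul_assoc, h2, one_mul]
  refine ⟨R, hReven, hsumR, fun z => ?_⟩
  have h1 : ∑ j, (a j).eval z * (β z * (R j).eval z)
      = β z * (∑ j, a j * R j).eval z := by
    rw [eval_finset_sum, Finset.mul_sum]
    refine Finset.sum_congr rfl fun j _ => ?_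
    simp only [eval_mul, eval_add, eval_C]
    ring
  rw [h1, hsumR, ← hbβ z]
end
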